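/- For every $k\in\mathbf{ex}$ one has $\textstyle\int_\mathbf{i}\mathbf{b}^k=\varepsilon_k+\varepsilon_{k^+}+\sum_{p=k+1}^{k^+-1} a_{i_p i_k}\varepsilon_p$. -/

import Mathlib

open Finset

/-- The weight lattice `𝒫`: the free abelian group with basis `{αᵢ, ωᵢ : i ∈ I}`,
represented by pairs of coefficient vectors (first component: coefficients of the `αᵢ`,
second component: coefficients of the `ωᵢ`). -/
abbrev PLat (n : ℕ) := (Fin n → ℤ) × (Fin n → ℤ)

/-- The coroot lattice `𝒬^∨`: the free abelian group with basis `{αᵢ^∨ : i ∈ I}`,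
represented by coefficient vectors. -/
abbrev QvLat (n : ℕ) := Fin n → ℤ

variable {n : ℕ}

/-- The basis element `α_j^∨` of `𝒬^∨`. -/
def coroot (j : Fin n) : QvLat n := fun k => if k = j then 1 else 0

/-- The basis element `α_j` of `𝒫`. -/
def alP (j : Fin n) : PLat n := (fun k => if k = j then 1 else 0, 0)

/-- The basis element `ω_j` of `𝒫`. -/
def omP (j : Fin n) : PLat n := (0, fun k => if k = j then 1 else 0)

/-- The biadditive pairing `𝒬^∨ × 𝒫 → ℤ` with `(αᵢ^∨, α_j) = a_{ij}` and
`(αᵢ^∨, ω_j) = δ_{ij}`. -/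
def pairQP (A : Fin n → Fin n → ℤ) (x : QvLat n) (lam : PLat n) : ℤ :=
  (∑ a, ∑ b, x a * A a b * lam.1 b) + ∑ a, x a * lam.2 a

/-- The simple reflection `sᵢ` on `𝒫`: `sᵢ α_j = α_j - a_{ij} αᵢ`,
`sᵢ ω_j = ω_j - δ_{ij} αᵢ`. -/
def sP (A : Fin n → Fin n → ℤ) (a : Fin n) (lam : PLat n) : PLat n :=
  (fun j => if j = a then lam.1 a - ((∑ k, A a k * lam.1 k) + lam.2 a) else lam.1 j,
   lam.2)

/-- The simple reflection `sᵢ^∨` on `𝒬^∨`: `sᵢ^∨ α_j^∨ = α_j^∨ - a_{ji} αᵢ^∨`. -/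
def sQ (A : Fin n → Fin n → ℤ) (a : Fin n) (x : QvLat n) : QvLat n :=
  fun j => if j = a then x a - ∑ k, A k a * x k else x j

/-- `w_ℓ = s_{i₁} ∘ ⋯ ∘ s_{i_ℓ}` on `𝒫` (with `w₀ = id`). -/
def wP (A : Fin n → Fin n → ℤ) (ii : ℕ → Fin n) : ℕ → PLat n → PLat n
  | 0 => id
  | (l+1) => wP A ii l ∘ sP A (ii (l+1))

/-- `w_ℓ^∨ = s_{i₁}^∨ ∘ ⋯ ∘ s_{i_ℓ}^∨` on `𝒬^∨` (with `w₀ = id`). -/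
def wQ (A : Fin n → Fin n → ℤ) (ii : ℕ → Fin n) : ℕ → QvLat n → QvLat n
  | 0 => id
  | (l+1) => wQ A ii l ∘ sQ A (ii (l+1))

/-- `k⁺ = min({ℓ : k < ℓ ≤ m, i_ℓ = i_k} ∪ {m+1})`. -/
noncomputable def kplus (ii : ℕ → Fin n) (m k : ℕ) : ℕ :=
  sInf ({l | k < l ∧ l ≤ m ∧ ii l = ii k} ∪ {m+1})

/-- `k⁻ = max({ℓ : 1 ≤ ℓ < k, i_ℓ = i_k} ∪ {0})`. -/
noncomputable def kminus (ii : ℕ → Fin n) (k : ℕ) : ℕ :=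
  sSup ({l | 1 ≤ l ∧ l < k ∧ ii l = ii k} ∪ {0})

/-- The standard basis vector `ε_k` of `ℤ^m` (1-based index), with the convention
`ε_s = 0` for `s ∉ {1,…,m}`. -/
def eps (m k : ℕ) : Fin m → ℤ := fun j => if (j : ℕ) + 1 = k then 1 else 0

/-- `φ_𝐢(ε_k) = -ε_k - ε_{k⁻} - ∑_{ℓ : ℓ < k < ℓ⁺} a_{i_ℓ i_k} ε_ℓ`. -/
noncomputable def phiE (A : Fin n → Fin n → ℤ) (ii : ℕ → Fin n) (m k : ℕ) :
    Fin m → ℤ :=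
  -(eps m k) - eps m (kminus ii k)
    - ∑ l : Fin m, (if (l:ℕ)+1 < k ∧ k < kplus ii m ((l:ℕ)+1)
        then A (ii ((l:ℕ)+1)) (ii k) else 0) • eps m ((l:ℕ)+1)

/-- The endomorphism `φ_𝐢` of `ℤ^m`, extended additively from its values on the basis. -/
noncomputable def phiMap (A : Fin n → Fin n → ℤ) (ii : ℕ → Fin n) (m : ℕ)
    (v : Fin m → ℤ) : Fin m → ℤ :=
  ∑ k : Fin m, v k • phiE A ii m ((k:ℕ)+1)

/-- `φ'_𝐢(ε_ℓ) = -∑_{k=1}^{ℓ} (w_k^∨ α_{i_k}^∨, w_ℓ ω_{i_ℓ}) ε_k`. -/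
def phiE' (A : Fin n → Fin n → ℤ) (ii : ℕ → Fin n) (m l : ℕ) : Fin m → ℤ :=
  -∑ k : Fin m, (if (k:ℕ)+1 ≤ l then
      pairQP A (wQ A ii ((k:ℕ)+1) (coroot (ii ((k:ℕ)+1)))) (wP A ii l (omP (ii l)))
    else 0) • eps m ((k:ℕ)+1)

/-- The endomorphism `φ'_𝐢` of `ℤ^m`, extended additively from its values on the basis. -/
def phiMap' (A : Fin n → Fin n → ℤ) (ii : ℕ → Fin n) (m : ℕ)
    (v : Fin m → ℤ) : Fin m → ℤ :=
  ∑ l : Fin m, v l • phiE' A ii m ((l:ℕ)+1)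

/-- `∂_𝐢 ε_k = ε_k - ε_{k⁻}`. -/
noncomputable def derE (ii : ℕ → Fin n) (m k : ℕ) : Fin m → ℤ :=
  eps m k - eps m (kminus ii k)

/-- The endomorphism `∂_𝐢` of `ℤ^m`. -/
noncomputable def derMap (ii : ℕ → Fin n) (m : ℕ) (v : Fin m → ℤ) : Fin m → ℤ :=
  ∑ k : Fin m, v k • derE ii m ((k:ℕ)+1)

/-- `∫_𝐢 ε_k = ε_k + ε_{k⁻} + ε_{(k⁻)⁻} + ⋯` (summing along the chain `k > k⁻ > ⋯ > 0`). -/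
noncomputable def intE (ii : ℕ → Fin n) (m : ℕ) (k : ℕ) : Fin m → ℤ :=
  if h : kminus ii k < k then eps m k + intE ii m (kminus ii k) else eps m k
termination_by k
decreasing_by exact h

/-- The endomorphism `∫_𝐢` of `ℤ^m`. -/
noncomputable def intMap (ii : ℕ → Fin n) (m : ℕ) (v : Fin m → ℤ) : Fin m → ℤ :=
  ∑ k : Fin m, v k • intE ii m ((k:ℕ)+1)

/-- The skew-symmetric biadditive form `Λ_𝐢` on `ℤ^m` with
`Λ_𝐢(ε_k, ε_ℓ) = sgn(k-ℓ) c_{i_k i_ℓ}` where `c_{ij} = dᵢ a_{ij}`. -/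
def LamF (A : Fin n → Fin n → ℤ) (d : Fin n → ℤ) (ii : ℕ → Fin n) (m : ℕ)
    (a b : Fin m → ℤ) : ℤ :=
  ∑ k : Fin m, ∑ l : Fin m, a k * b l *
    ((((k:ℕ):ℤ) - ((l:ℕ):ℤ)).sign *
      (d (ii ((k:ℕ)+1)) * A (ii ((k:ℕ)+1)) (ii ((l:ℕ)+1))))

/-- The biadditive form `Φ_𝐢` on `ℤ^m` with `Φ_𝐢(ε_k,ε_ℓ) = -d_{i_k}` if `k = ℓ`,
`= -c_{i_ℓ i_k}` if `ℓ < k`, and `= 0` if `ℓ > k`. -/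
def PhiF (A : Fin n → Fin n → ℤ) (d : Fin n → ℤ) (ii : ℕ → Fin n) (m : ℕ)
    (a b : Fin m → ℤ) : ℤ :=
  ∑ k : Fin m, ∑ l : Fin m, a k * b l *
    (if (k:ℕ) = (l:ℕ) then -(d (ii ((k:ℕ)+1)))
     else if (l:ℕ) < (k:ℕ) then
       -(d (ii ((l:ℕ)+1)) * A (ii ((l:ℕ)+1)) (ii ((k:ℕ)+1)))
     else 0)

/-- The entry `b_{pk}` of the exchange matrix `B̃_𝐢`. -/
noncomputable def bcoef (A : Fin n → Fin n → ℤ) (ii : ℕ → Fin n) (m p k : ℕ) : ℤ :=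
  if p = kminus ii k then -1
  else if p < k ∧ k < kplus ii m p ∧ kplus ii m p < kplus ii m k then
    -(A (ii p) (ii k))
  else if k < p ∧ p < kplus ii m k ∧ kplus ii m k < kplus ii m p then
    A (ii p) (ii k)
  else if p = kplus ii m k then 1
  else 0

/-- The column `𝐛^k = ∑_p b_{pk} ε_p ∈ ℤ^m` of the exchange matrix. -/
noncomputable def bvec (A : Fin n → Fin n → ℤ) (ii : ℕ → Fin n) (m k : ℕ) :
    Fin m → ℤ :=
  fun p => bcoef A ii m ((p:ℕ)+1) k

/-- `ρ_𝐢⁺(ε_k) = ε_k + ∑_{ℓ<k, ℓ⁺=m+1} a_{i_ℓ i_k} ε_ℓ`. -/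
noncomputable def rhoPE (A : Fin n → Fin n → ℤ) (ii : ℕ → Fin n) (m k : ℕ) :
    Fin m → ℤ :=
  eps m k + ∑ l : Fin m, (if (l:ℕ)+1 < k ∧ kplus ii m ((l:ℕ)+1) = m+1
      then A (ii ((l:ℕ)+1)) (ii k) else 0) • eps m ((l:ℕ)+1)

/-- `ρ_𝐢⁻(ε_k) = ε_k - ∑_{ℓ≤k, ℓ⁺=m+1} a_{i_ℓ i_k} ε_ℓ`. -/
noncomputable def rhoME (A : Fin n → Fin n → ℤ) (ii : ℕ → Fin n) (m k : ℕ) :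
    Fin m → ℤ :=
  eps m k - ∑ l : Fin m, (if (l:ℕ)+1 ≤ k ∧ kplus ii m ((l:ℕ)+1) = m+1
      then A (ii ((l:ℕ)+1)) (ii k) else 0) • eps m ((l:ℕ)+1)

/-- The endomorphism `ρ_𝐢⁺` of `ℤ^m`. -/
noncomputable def rhoPMap (A : Fin n → Fin n → ℤ) (ii : ℕ → Fin n) (m : ℕ)
    (v : Fin m → ℤ) : Fin m → ℤ :=
  ∑ k : Fin m, v k • rhoPE A ii m ((k:ℕ)+1)

/-- The endomorphism `ρ_𝐢⁻` of `ℤ^m`. -/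
noncomputable def rhoMMap (A : Fin n → Fin n → ℤ) (ii : ℕ → Fin n) (m : ℕ)
    (v : Fin m → ℤ) : Fin m → ℤ :=
  ∑ k : Fin m, v k • rhoME A ii m ((k:ℕ)+1)

/-- `𝐚_λ = -∑_{k=1}^m (w_k^∨ α_{i_k}^∨, w_m λ) ε_k ∈ ℤ^m`. -/
def avec (A : Fin n → Fin n → ℤ) (ii : ℕ → Fin n) (m : ℕ) (lam : PLat n) :
    Fin m → ℤ :=
  fun k => -(pairQP A (wQ A ii ((k:ℕ)+1) (coroot (ii ((k:ℕ)+1)))) (wP A ii m lam))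

/-- `|𝐚| = ∑_{k=1}^m a_k α_{i_k} ∈ 𝒬 ⊆ 𝒫`. -/
def degP (ii : ℕ → Fin n) (m : ℕ) (a : Fin m → ℤ) : PLat n :=
  (fun j => ∑ k : Fin m, if ii ((k:ℕ)+1) = j then a k else 0, 0)

/-- The pairing `(μ, λ) = ∑ mᵢ dᵢ (αᵢ^∨, λ)` for `μ = ∑ mᵢ αᵢ ∈ 𝒬` and `λ ∈ 𝒫`
(induced by identifying `αᵢ` with `dᵢ αᵢ^∨`). -/
def pairAl (A : Fin n → Fin n → ℤ) (d : Fin n → ℤ) (mu lam : PLat n) : ℤ :=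
  ∑ j, mu.1 j * (d j * pairQP A (coroot j) lam)

/-! `∫_𝐢` inverts `∂_𝐢`. The `q`-th coordinate of `∫_𝐢 v` is the sum of the coordinates of `v`
along the chain `q, q⁺, q⁺⁺, … ≤ m`, so if `v_p = F(p) - F(p⁺)` with `F(m+1) = 0` the sum
telescopes and `∫_𝐢 v = F`. The column `𝐛^k` has this form with `F` the claimed right-hand side;
this is checked entry by entry, separately for `i_p = i_k` and `i_p ≠ i_k`. -/

section Neighbours

variable (ii : ℕ → Fin n) (m : ℕ)

lemma kplus_eq_or (k : ℕ) :
    kplus ii m k = m + 1 ∨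
      (k < kplus ii m k ∧ kplus ii m k ≤ m ∧ ii (kplus ii m k) = ii k) :=
  (Nat.sInf_mem (s := {l | k < l ∧ l ≤ m ∧ ii l = ii k} ∪ {m + 1}) ⟨m + 1, Or.inr rfl⟩).symm

lemma kplus_le_succ (k : ℕ) : kplus ii m k ≤ m + 1 :=
  Nat.sInf_le (Or.inr rfl)

variable {m}

lemma kplus_le {k l : ℕ} (hkl : k < l) (hl : l ≤ m) (h : ii l = ii k) : kplus ii m k ≤ l :=
  Nat.sInf_le (Or.inl ⟨hkl, hl, h⟩)

lemma lt_kplus {k : ℕ} (hk : k ≤ m) : k < kplus ii m k := by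
  rcases kplus_eq_or ii m k with h | h <;> omega

lemma kplus_spec {k : ℕ} (h : kplus ii m k ≤ m) : k < kplus ii m k ∧ ii (kplus ii m k) = ii k := by
  rcases kplus_eq_or ii m k with h' | h'
  · omega
  · exact ⟨h'.1, h'.2.2⟩

lemma ne_of_lt_of_lt_kplus {k l : ℕ} (hkl : k < l) (hl : l < kplus ii m k) : ii l ≠ ii k := by
  intro h
  have := kplus_le ii (m := m) hkl (by have := kplus_le_succ ii m k; omega) h
  omega

lemma bddAbove_kminus_set (k : ℕ) :
    BddAbove ({l | 1 ≤ l ∧ l < k ∧ ii l = ii k} ∪ {0} : Set ℕ) := by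
  refine ⟨k, fun l hl => ?_⟩
  rcases hl with ⟨-, hlk, -⟩ | rfl <;> omega

lemma kminus_eq_or (k : ℕ) :
    kminus ii k = 0 ∨ (1 ≤ kminus ii k ∧ kminus ii k < k ∧ ii (kminus ii k) = ii k) :=
  (Nat.sSup_mem ⟨0, Or.inr rfl⟩ (bddAbove_kminus_set ii k)).symm

lemma le_kminus {k l : ℕ} (hl : 1 ≤ l) (hlk : l < k) (h : ii l = ii k) : l ≤ kminus ii k :=
  le_csSup (bddAbove_kminus_set ii k) (Or.inl ⟨hl, hlk, h⟩)

lemma kplus_eq_iff_eq_kminus {p k : ℕ} (hp : 1 ≤ p) (hk : k ≤ m) :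
    kplus ii m p = k ↔ p = kminus ii k := by
  constructor
  · rintro rfl
    obtain ⟨hpP, hletter⟩ := kplus_spec ii hk
    have hle := le_kminus ii hp hpP hletter.symm
    rcases kminus_eq_or ii (kplus ii m p) with h | ⟨-, hlt, hletter'⟩
    · omega
    by_contra hne
    exact ne_of_lt_of_lt_kplus ii (by omega) hlt (hletter'.trans hletter)
  · rintro rfl
    rcases kminus_eq_or ii k with h | ⟨-, hlt, hletter⟩
    · omega
    have hle := kplus_le ii hlt hk hletter.symm
    by_contra hne
    obtain ⟨hpP, hletter'⟩ := kplus_spec ii (m := m) (k := kminus ii k) (by omega)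
    exact absurd (le_kminus ii (by omega) (by omega) (hletter'.trans hletter)) (by omega)

end Neighbours

section Integration

variable (ii : ℕ → Fin n) (m : ℕ)

lemma sum_smul_eps (c : Fin m → ℤ) : ∑ p : Fin m, c p • eps m ((p : ℕ) + 1) = c := by
  funext q
  simp [Finset.sum_apply, eps, Fin.val_inj]

lemma intE_apply (k : ℕ) (q : Fin m) :
    intE ii m k q = if (q : ℕ) + 1 ≤ k ∧ ii ((q : ℕ) + 1) = ii k then 1 else 0 := by
  induction k using Nat.strong_induction_on with
  | _ k ih =>
  rcases kminus_eq_or ii k with h0 | ⟨h1, hlt, hletter⟩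
  · have hstep : intE ii m k q = eps m k q := by
      rw [intE]
      split_ifs with hk
      · rw [Pi.add_apply, ih _ hk, h0, if_neg (by omega), add_zero]
      · rfl
    refine hstep.trans (if_congr ⟨fun h => ⟨h.le, by rw [h]⟩, fun h => ?_⟩ rfl rfl)
    by_contra hne
    exact absurd (le_kminus ii (by omega) (lt_of_le_of_ne h.1 hne) h.2) (by omega)
  · rw [intE, dif_pos hlt, Pi.add_apply, ih _ hlt, hletter]
    by_cases hqk : (q : ℕ) + 1 = k
    · simp only [eps, hqk, le_refl, true_and, if_true]
      rw [if_neg (by omega), add_zero]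
    · rw [eps, if_neg hqk, zero_add]
      refine if_congr ⟨fun h => ⟨by omega, h.2⟩, fun h => ⟨?_, h.2⟩⟩ rfl rfl
      exact le_kminus ii (by omega) (lt_of_le_of_ne h.1 hqk) h.2

/-- The positions `j, j⁺, j⁺⁺, …` that are at most `m`. -/
def upChain (j : ℕ) : Finset ℕ := (Icc j m).filter (fun p => ii p = ii j)

lemma intMap_apply (f : ℕ → ℤ) (q : Fin m) :
    intMap ii m (fun p => f ((p : ℕ) + 1)) q = ∑ p ∈ upChain ii m ((q : ℕ) + 1), f p := by
  set g : ℕ → ℤ := fun p => if (q : ℕ) + 1 ≤ p ∧ ii ((q : ℕ) + 1) = ii p then f p else 0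
  have hterm (p : Fin m) : (f ((p : ℕ) + 1) • intE ii m ((p : ℕ) + 1)) q = g ((p : ℕ) + 1) := by
    rw [Pi.smul_apply, intE_apply, smul_eq_mul, mul_ite, mul_one, mul_zero]
  rw [intMap, Finset.sum_apply, Fintype.sum_congr _ _ hterm,
    Fin.sum_univ_eq_sum_range (fun p => g (p + 1)), range_eq_Ico, sum_Ico_add', sum_ite,
    sum_const_zero, add_zero, upChain]
  congr 1
  ext p
  simp only [mem_filter, mem_Ico, mem_Icc]
  constructor
  · rintro ⟨⟨-, hm⟩, h, hl⟩
    exact ⟨⟨h, by omega⟩, hl.symm⟩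
  · rintro ⟨⟨h, hm⟩, hl⟩
    exact ⟨⟨by omega, by omega⟩, h, hl.symm⟩

variable {m}

lemma upChain_of_kplus_le {j : ℕ} (h : kplus ii m j ≤ m) :
    upChain ii m j = insert j (upChain ii m (kplus ii m j)) := by
  obtain ⟨hj, hletter⟩ := kplus_spec ii h
  ext p
  simp only [upChain, mem_insert, mem_filter, mem_Icc, hletter]
  constructor
  · rintro ⟨⟨hjp, hpm⟩, hp⟩
    rcases eq_or_lt_of_le hjp with rfl | hlt
    · exact Or.inl rfl
    · exact Or.inr ⟨⟨kplus_le ii hlt hpm hp, hpm⟩, hp⟩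
  · rintro (rfl | ⟨⟨hjp, hpm⟩, hp⟩)
    · exact ⟨⟨le_rfl, by omega⟩, rfl⟩
    · exact ⟨⟨by omega, hpm⟩, hp⟩

lemma upChain_of_kplus_eq {j : ℕ} (hj : j ≤ m) (h : kplus ii m j = m + 1) :
    upChain ii m j = {j} := by
  ext p
  simp only [upChain, mem_filter, mem_Icc, mem_singleton]
  constructor
  · rintro ⟨⟨hjp, hpm⟩, hp⟩
    by_contra hne
    have := kplus_le ii (lt_of_le_of_ne hjp (Ne.symm hne)) hpm hp
    omega
  · rintro rfl
    exact ⟨⟨le_rfl, hj⟩, rfl⟩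

theorem sum_upChain_sub_kplus (F : ℕ → ℤ) {j : ℕ} (hj : j ≤ m) :
    ∑ p ∈ upChain ii m j, (F p - F (kplus ii m p)) = F j - F (m + 1) := by
  rcases kplus_eq_or ii m j with h | ⟨hlt, hle, -⟩
  · rw [upChain_of_kplus_eq ii hj h, sum_singleton, h]
  · have hj_notMem : j ∉ upChain ii m (kplus ii m j) := by
      simp only [upChain, mem_filter, mem_Icc]
      omega
    rw [upChain_of_kplus_le ii hle, sum_insert hj_notMem, sum_upChain_sub_kplus F hle]
    ring
termination_by m + 1 - j

theorem intMap_sub_kplus (F : ℕ → ℤ) (hF : F (m + 1) = 0) :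
    intMap ii m (fun p => F ((p : ℕ) + 1) - F (kplus ii m ((p : ℕ) + 1))) =
      fun q : Fin m => F ((q : ℕ) + 1) := by
  funext q
  rw [intMap_apply ii m (fun p => F p - F (kplus ii m p)),
    sum_upChain_sub_kplus ii F q.isLt, hF, sub_zero]

end Integration

section ExchangeColumn

variable (A : Fin n → Fin n → ℤ) (ii : ℕ → Fin n) (m k : ℕ)

noncomputable def bvecPrimitive (x : ℕ) : ℤ :=
  ((if x = k then 1 else 0) + if x = kplus ii m k then 1 else 0)
    + if k < x ∧ x < kplus ii m k then A (ii x) (ii k) else 0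

variable {m k}

lemma bcoef_eq_sub {p : ℕ} (hK : kplus ii m k ≤ m) (hp : 1 ≤ p) (hpm : p ≤ m) :
    bcoef A ii m p k =
      bvecPrimitive A ii m k p - bvecPrimitive A ii m k (kplus ii m p) := by
  obtain ⟨hkK, hletterK⟩ := kplus_spec ii hK
  have hpP := lt_kplus ii hpm
  have hPm := kplus_le_succ ii m p
  have hminus := kplus_eq_iff_eq_kminus ii hp (show k ≤ m by omega)
  simp only [bcoef, bvecPrimitive]
  by_cases hl : ii p = ii k
  · have hpk : p < k → kplus ii m p ≤ k := fun h => kplus_le ii h (by omega) hl.symm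
    have hkp : k < p → kplus ii m k ≤ p := fun h => by
      by_contra hlt
      exact ne_of_lt_of_lt_kplus ii (m := m) h (by omega) hl
    have hpk_eq : p = k → kplus ii m p = kplus ii m k := fun h => h ▸ rfl
    have hp_out : ¬(k < p ∧ p < kplus ii m k) := fun h => ne_of_lt_of_lt_kplus ii h.1 h.2 hl
    have hP_out : ¬(k < kplus ii m p ∧ kplus ii m p < kplus ii m k) := fun h =>
      ne_of_lt_of_lt_kplus ii h.1 h.2 ((kplus_spec ii (m := m) (by omega)).2.trans hl)
    simp only [hminus]
    split_ifs <;> omega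
  · have hpK : p ≠ kplus ii m k := fun h => hl (h ▸ hletterK)
    have hpk : p ≠ k := fun h => hl (h ▸ rfl)
    have hp_minus : p ≠ kminus ii k := by
      rintro rfl
      rcases kminus_eq_or ii k with h | ⟨-, -, h⟩
      · omega
      · exact hl h
    have hPK : kplus ii m p ≠ kplus ii m k := by
      intro h
      exact hl ((kplus_spec ii (m := m) (by omega)).2.symm.trans (by rw [h, hletterK]))
    have hP_letter : (if k < kplus ii m p ∧ kplus ii m p < kplus ii m k
        then A (ii (kplus ii m p)) (ii k) else 0) =
        if k < kplus ii m p ∧ kplus ii m p < kplus ii m k then A (ii p) (ii k) else 0 := by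
      split_ifs with h
      · rw [(kplus_spec ii (m := m) (by omega)).2]
      · rfl
    rw [hP_letter]
    simp only [hminus]
    split_ifs <;> omega

end ExchangeColumn

theorem int_bvec_general {n m : ℕ}
    (A : Fin n → Fin n → ℤ)
    (ii : ℕ → Fin n)
    (k : ℕ) (hk2 : kplus ii m k ≤ m) :
    intMap ii m (bvec A ii m k) =
      eps m k + eps m (kplus ii m k)
        + ∑ p : Fin m, (if k < (p:ℕ)+1 ∧ (p:ℕ)+1 < kplus ii m k
            then A (ii ((p:ℕ)+1)) (ii k) else 0) • eps m ((p:ℕ)+1) := by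
  have hb : bvec A ii m k = fun p : Fin m => bvecPrimitive A ii m k ((p : ℕ) + 1) -
      bvecPrimitive A ii m k (kplus ii m ((p : ℕ) + 1)) :=
    funext fun p => bcoef_eq_sub A ii hk2 (Nat.le_add_left 1 p) p.isLt
  have hvanish : bvecPrimitive A ii m k (m + 1) = 0 := by
    have := (kplus_spec ii hk2).1
    simp only [bvecPrimitive]
    split_ifs <;> omega
  rw [hb, intMap_sub_kplus ii _ hvanish, sum_smul_eps]
  rfl

/-- `∫_𝐢 𝐛^k = ε_k + ε_{k⁺} + ∑_{p=k+1}^{k⁺-1} a_{i_p i_k} ε_p` for `k ∈ 𝐞𝐱`. -/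
theorem int_bvec {n m : ℕ} (hm : 1 ≤ m)
    (A : Fin n → Fin n → ℤ) (d : Fin n → ℤ)
    (hA : ∀ i, A i i = 2) (hd : ∀ i, 0 < d i)
    (hsym : ∀ i j, d i * A i j = d j * A j i)
    (ii : ℕ → Fin n)
    (k : ℕ) (hk1 : 1 ≤ k) (hk2 : kplus ii m k ≤ m) :
    intMap ii m (bvec A ii m k) =
      eps m k + eps m (kplus ii m k)
        + ∑ p : Fin m, (if k < (p:ℕ)+1 ∧ (p:ℕ)+1 < kplus ii m k
            then A (ii ((p:ℕ)+1)) (ii k) else 0) • eps m ((p:ℕ)+1) :=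
  int_bvec_general A ii k hk2
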